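/- Combined simulation lemma with cost error: under the hypotheses of the simulation lemma and additionally |c(s,a) − ĉ(s,a)| ≤ ε for all (s,a), one has |E_{P̂}[∑_{k=t}^{t+H−1} γ^k ĉ(s_k, a_k)] − E_P[∑_{k=t}^{t+H−1} γ^k c(s_k, a_k)]| ≤ γ^t H ((c_max−c_min)/2)((1−γ^H)/(1−γ)) · η' + ε γ^t (1−γ^H)/(1−γ), where η' bounds the per-step transition error so that ‖P − P̂‖₁ ≤ H·η'. -/
import Mathlib


open Finset

/-- Combined simulation lemma with cost error: with ‖P − P̂‖₁ ≤ H·η' and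
‖c − ĉ‖_∞ ≤ ε, the model expected discounted cost is within
γ^t H ((c_max−c_min)/2)((1−γ^H)/(1−γ)) η' + ε γ^t (1−γ^H)/(1−γ) of the true one. -/
theorem simulation_lemma_with_cost_error {S A : Type*} [Fintype S]
    (t H : ℕ) (γ : ℝ) (hγ0 : 0 ≤ γ) (hγ1 : γ < 1)
    (c chat : S → A → ℝ) (cmin cmax ε : ℝ)
    (hc : ∀ s a, cmin ≤ c s a ∧ c s a ≤ cmax)
    (hchat : ∀ s a, cmin ≤ chat s a ∧ chat s a ≤ cmax)
    (hcε : ∀ s a, |c s a - chat s a| ≤ ε)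
    (π : (Fin H → S) → ℕ → A)
    (P Phat : (Fin H → S) → ℝ) (η' : ℝ)
    (hP0 : ∀ τ, 0 ≤ P τ) (hP1 : ∑ τ, P τ = 1)
    (hPhat0 : ∀ τ, 0 ≤ Phat τ) (hPhat1 : ∑ τ, Phat τ = 1)
    (htv : ∑ τ, |P τ - Phat τ| ≤ (H : ℝ) * η') :
    |(∑ τ, Phat τ * ∑ k : Fin H, γ ^ (t + (k : ℕ)) * chat (τ k) (π τ (t + (k : ℕ)))) -
        ∑ τ, P τ * ∑ k : Fin H, γ ^ (t + (k : ℕ)) * c (τ k) (π τ (t + (k : ℕ)))| ≤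
      γ ^ t * (H : ℝ) * ((cmax - cmin) / 2) * ((1 - γ ^ H) / (1 - γ)) * η'
        + ε * γ ^ t * (1 - γ ^ H) / (1 - γ) := by
  have hγne : γ ≠ 1 := ne_of_lt hγ1
  set G : ℝ := ∑ k ∈ Finset.range H, γ ^ k with hG
  have hGeq : G = (1 - γ ^ H) / (1 - γ) := by
    rw [hG, geom_sum_eq hγne]
    rw [div_eq_div_iff (by linarith) (by linarith)]
    ring
  have hG0 : 0 ≤ G := Finset.sum_nonneg fun k _ => pow_nonneg hγ0 k
  set f : (Fin H → S) → ℝ :=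
    fun τ => ∑ k : Fin H, γ ^ (t + (k : ℕ)) * c (τ k) (π τ (t + (k : ℕ))) with hf
  set fhat : (Fin H → S) → ℝ :=
    fun τ => ∑ k : Fin H, γ ^ (t + (k : ℕ)) * chat (τ k) (π τ (t + (k : ℕ))) with hfhat
  -- sum of discount factors
  have hdisc : ∀ (b : ℝ), (∑ k : Fin H, γ ^ (t + (k : ℕ)) * b) = γ ^ t * G * b := by
    intro b
    rw [Fin.sum_univ_eq_sum_range (fun k => γ ^ (t + k) * b) H, hG, Finset.mul_sum,
      Finset.sum_mul]
    exact Finset.sum_congr rfl fun k _ => by rw [pow_add]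
  -- bound cmax - cmin related term nonneg (or G = 0)
  have hr0 : 0 ≤ γ ^ t * G * ((cmax - cmin) / 2) := by
    rcases Nat.eq_zero_or_pos H with h0 | hpos
    · simp [hG, h0]
    · have hS : Nonempty S := by
        by_contra h
        haveI : IsEmpty S := not_nonempty_iff.mp h
        haveI : Nonempty (Fin H) := ⟨⟨0, hpos⟩⟩
        haveI : IsEmpty (Fin H → S) := by infer_instance
        rw [Finset.univ_eq_empty, Finset.sum_empty] at hP1
        exact one_ne_zero hP1.symm
      obtain ⟨s⟩ := hS
      have ha := hc s (π (fun _ => s) t)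
      have : cmin ≤ cmax := le_trans ha.1 ha.2
      have : 0 ≤ (cmax - cmin) / 2 := by linarith
      positivity
  have key1 : ∀ τ, |fhat τ - f τ| ≤ ε * (γ ^ t * G) := by
    intro τ
    have heq : fhat τ - f τ = ∑ k : Fin H, γ ^ (t + (k : ℕ)) *
        (chat (τ k) (π τ (t + (k : ℕ))) - c (τ k) (π τ (t + (k : ℕ)))) := by
      rw [hf, hfhat]
      rw [← Finset.sum_sub_distrib]
      exact Finset.sum_congr rfl fun k _ => by ring
    calc |fhat τ - f τ|
        ≤ ∑ k : Fin H, |γ ^ (t + (k : ℕ)) *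
            (chat (τ k) (π τ (t + (k : ℕ))) - c (τ k) (π τ (t + (k : ℕ))))| := by
          rw [heq]; exact Finset.abs_sum_le_sum_abs _ _
      _ ≤ ∑ k : Fin H, γ ^ (t + (k : ℕ)) * ε := by
          refine Finset.sum_le_sum fun k _ => ?_
          rw [abs_mul, abs_of_nonneg (pow_nonneg hγ0 _)]
          refine mul_le_mul_of_nonneg_left ?_ (pow_nonneg hγ0 _)
          rw [abs_sub_comm]; exact hcε _ _
      _ = ε * (γ ^ t * G) := by rw [hdisc]; ring
  have key2 : ∀ τ, |f τ - γ ^ t * G * ((cmax + cmin) / 2)| ≤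
      γ ^ t * G * ((cmax - cmin) / 2) := by
    intro τ
    have heq : f τ - γ ^ t * G * ((cmax + cmin) / 2) = ∑ k : Fin H, γ ^ (t + (k : ℕ)) *
        (c (τ k) (π τ (t + (k : ℕ))) - (cmax + cmin) / 2) := by
      rw [hf, ← hdisc ((cmax + cmin) / 2), ← Finset.sum_sub_distrib]
      exact Finset.sum_congr rfl fun k _ => by ring
    calc |f τ - γ ^ t * G * ((cmax + cmin) / 2)|
        ≤ ∑ k : Fin H, |γ ^ (t + (k : ℕ)) *
            (c (τ k) (π τ (t + (k : ℕ))) - (cmax + cmin) / 2)| := by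
          rw [heq]; exact Finset.abs_sum_le_sum_abs _ _
      _ ≤ ∑ k : Fin H, γ ^ (t + (k : ℕ)) * ((cmax - cmin) / 2) := by
          refine Finset.sum_le_sum fun k _ => ?_
          rw [abs_mul, abs_of_nonneg (pow_nonneg hγ0 _)]
          refine mul_le_mul_of_nonneg_left ?_ (pow_nonneg hγ0 _)
          have h1 := (hc (τ k) (π τ (t + (k : ℕ)))).1
          have h2 := (hc (τ k) (π τ (t + (k : ℕ)))).2
          rw [abs_le]; constructor <;> linarith
      _ = γ ^ t * G * ((cmax - cmin) / 2) := hdisc _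
  have step1 : |(∑ τ, Phat τ * fhat τ) - ∑ τ, Phat τ * f τ| ≤ ε * (γ ^ t * G) := by
    rw [← Finset.sum_sub_distrib]
    calc |∑ τ, (Phat τ * fhat τ - Phat τ * f τ)|
        ≤ ∑ τ, |Phat τ * fhat τ - Phat τ * f τ| := Finset.abs_sum_le_sum_abs _ _
      _ ≤ ∑ τ, Phat τ * (ε * (γ ^ t * G)) := by
          refine Finset.sum_le_sum fun τ _ => ?_
          rw [← mul_sub, abs_mul, abs_of_nonneg (hPhat0 τ)]
          exact mul_le_mul_of_nonneg_left (key1 τ) (hPhat0 τ)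
      _ = ε * (γ ^ t * G) := by rw [← Finset.sum_mul, hPhat1, one_mul]
  have step2 : |(∑ τ, Phat τ * f τ) - ∑ τ, P τ * f τ| ≤
      (H : ℝ) * η' * (γ ^ t * G * ((cmax - cmin) / 2)) := by
    have hzero : (∑ τ, (Phat τ - P τ) * (γ ^ t * G * ((cmax + cmin) / 2))) = 0 := by
      rw [← Finset.sum_mul, Finset.sum_sub_distrib, hPhat1, hP1, sub_self, zero_mul]
    have heq : (∑ τ, Phat τ * f τ) - ∑ τ, P τ * f τ =
        ∑ τ, (Phat τ - P τ) * (f τ - γ ^ t * G * ((cmax + cmin) / 2)) := by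
      rw [← sub_zero ((∑ τ, Phat τ * f τ) - ∑ τ, P τ * f τ), ← hzero,
        ← Finset.sum_sub_distrib, ← Finset.sum_sub_distrib]
      exact Finset.sum_congr rfl fun τ _ => by ring
    rw [heq]
    calc |∑ τ, (Phat τ - P τ) * (f τ - γ ^ t * G * ((cmax + cmin) / 2))|
        ≤ ∑ τ, |(Phat τ - P τ) * (f τ - γ ^ t * G * ((cmax + cmin) / 2))| :=
          Finset.abs_sum_le_sum_abs _ _
      _ ≤ ∑ τ, |Phat τ - P τ| * (γ ^ t * G * ((cmax - cmin) / 2)) := by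
          refine Finset.sum_le_sum fun τ _ => ?_
          rw [abs_mul]
          exact mul_le_mul_of_nonneg_left (key2 τ) (abs_nonneg _)
      _ ≤ (H : ℝ) * η' * (γ ^ t * G * ((cmax - cmin) / 2)) := by
          rw [← Finset.sum_mul]
          refine mul_le_mul_of_nonneg_right ?_ hr0
          calc (∑ τ, |Phat τ - P τ|) = ∑ τ, |P τ - Phat τ| := by
                exact Finset.sum_congr rfl fun τ _ => abs_sub_comm _ _
            _ ≤ (H : ℝ) * η' := htv
  calc |(∑ τ, Phat τ * fhat τ) - ∑ τ, P τ * f τ|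
      ≤ |(∑ τ, Phat τ * fhat τ) - ∑ τ, Phat τ * f τ| +
        |(∑ τ, Phat τ * f τ) - ∑ τ, P τ * f τ| := abs_sub_le _ _ _
    _ ≤ ε * (γ ^ t * G) + (H : ℝ) * η' * (γ ^ t * G * ((cmax - cmin) / 2)) :=
        add_le_add step1 step2
    _ = γ ^ t * (H : ℝ) * ((cmax - cmin) / 2) * ((1 - γ ^ H) / (1 - γ)) * η'
        + ε * γ ^ t * (1 - γ ^ H) / (1 - γ) := by rw [hGeq]; ring
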